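/- For density matrices σ1 and σ2 on ℂ^n (n ≥ 1), objective compatibility holds if and only if subjective compatibility holds. -/

import Mathlib

open scoped ComplexOrder

/-- A density matrix on `ℂ^n`: a positive semidefinite matrix of trace `1`. -/
def IsDensityMatrix {n : ℕ} (σ : Matrix (Fin n) (Fin n) ℂ) : Prop :=
  σ.PosSemidef ∧ σ.trace = 1

/-- Objective compatibility of two quantum state assignments `σ1`, `σ2` on `ℂ^n`. -/
def QObjCompatible {n : ℕ} (σ1 σ2 : Matrix (Fin n) (Fin n) ℂ) : Prop :=
  ∃ (X1 : Type) (_ : Fintype X1) (X2 : Type) (_ : Fintype X2),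
    Nonempty X1 ∧ Nonempty X2 ∧
    ∃ (ρ : X1 → X2 → Matrix (Fin n) (Fin n) ℂ) (x1 : X1) (x2 : X2),
      (∀ a b, (ρ a b).PosSemidef) ∧
      (∑ a, ∑ b, (ρ a b).trace = 1) ∧
      0 < ((ρ x1 x2).trace).re ∧
      σ1 = ((∑ b, ρ x1 b).trace)⁻¹ • (∑ b, ρ x1 b) ∧
      σ2 = ((∑ a, ρ a x2).trace)⁻¹ • (∑ a, ρ a x2)

/-- The positive semidefinite square root, as `Matrix.PosSemidef.sqrt` was defined in older Mathlib. -/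
noncomputable def Matrix.PosSemidef.sqrt {n 𝕜 : Type*} [Fintype n] [DecidableEq n] [RCLike 𝕜]
    {A : Matrix n n 𝕜} (hA : A.PosSemidef) : Matrix n n 𝕜 :=
  (hA.1.eigenvectorUnitary : Matrix n n 𝕜) *
    Matrix.diagonal (fun i => ((Real.sqrt (hA.1.eigenvalues i) : ℝ) : 𝕜)) *
    (star hA.1.eigenvectorUnitary : Matrix n n 𝕜)

/-- Subjective compatibility of two positive semidefinite state assignments
`σ1`, `σ2` on `ℂ^n`. -/
def QSubjCompatible {n : ℕ} {σ1 σ2 : Matrix (Fin n) (Fin n) ℂ}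
    (h1 : σ1.PosSemidef) (h2 : σ2.PosSemidef) : Prop :=
  ∃ (X : Type) (_ : Fintype X),
    Nonempty X ∧
    ∃ E : X → Matrix (Fin n) (Fin n) ℂ,
      (∀ x, (E x).PosSemidef) ∧
      (∑ x, E x = 1) ∧
      (∀ x, 0 < ((E x * σ1).trace).re ∧ 0 < ((E x * σ2).trace).re) ∧
      ∃ xt : X,
        ((E xt * σ1).trace)⁻¹ • (h1.sqrt * E xt * h1.sqrt) =
        ((E xt * σ2).trace)⁻¹ • (h2.sqrt * E xt * h2.sqrt)

/-!
Both notions of compatibility are equivalent to `ker σ₁ + ker σ₂ ≠ ℂⁿ`, i.e. to the supports of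
`σ₁` and `σ₂` intersecting nontrivially.

An objective witness `ρ` provides a nonzero `τ = ρ x₁ x₂` lying below both normalised marginals,
so `ker σ₁ + ker σ₂ ⊆ ker τ`. Given that, with `A = √σ₁`, `B = √σ₂`, `H = (A + B)^{-1/2}`
(pseudo-inverse) and `P = H (A + B) H` the projection onto the range of `A + B`, the matrices
`H A H` and `H B H` add up to `P`. If `H B H` were a projection, `H A H` and `H B H` would be
orthogonal and `ker A + ker B` would be everything; otherwise an eigenvector `u` of `H B H` with
eigenvalue `β ∉ {0, 1}` gives `w = H u` with `β A w = (1 - β) B w ≠ 0`. The two-outcome POVM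
`{Π/2, 1 - Π/2}`, with `Π` the projection onto `w`, is then a subjective witness: after the outcome
`Π/2` both updated states are the projection onto `A w ∥ B w`.

Conversely a subjective witness `E` gives `√σ₁ E √σ₁ ∝ √σ₂ E √σ₂`, a nonzero common lower bound
`τ` of `σ₁` and `σ₂`, and `ρ = ½ [[τ, σ₁ - τ], [σ₂ - τ, τ]]` is an objective witness.
-/

open Matrix
open scoped MatrixOrder

theorem Real.inv_sqrt_mul_self_mul_inv_sqrt {x : ℝ} (hx : 0 < x) : (√x)⁻¹ * x * (√x)⁻¹ = 1 := by
  have := Real.sqrt_pos.mpr hx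
  field_simp
  exact (Real.sq_sqrt hx.le).symm

namespace Matrix

section projLine

variable {m 𝕜 : Type*} [Fintype m] [RCLike 𝕜]

noncomputable def projLine (v : m → 𝕜) : Matrix m m 𝕜 :=
  (star v ⬝ᵥ v)⁻¹ • vecMulVec v (star v)

theorem projLine_smul (v : m → 𝕜) {c : 𝕜} (hc : c ≠ 0) : projLine (c • v) = projLine v := by
  have hc' : star c ≠ 0 := star_ne_zero.mpr hc
  simp only [projLine, star_smul, smul_dotProduct, dotProduct_smul, smul_vecMulVec,
    vecMulVec_smul, smul_smul, smul_eq_mul]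
  congr 1
  field_simp

theorem projLine_mul_self {v : m → 𝕜} (hv : v ≠ 0) : projLine v * projLine v = projLine v := by
  have hv' : star v ⬝ᵥ v ≠ 0 := (dotProduct_star_self_pos_iff.mpr hv).ne'
  rw [projLine, smul_mul_smul_comm, vecMulVec_mul_vecMulVec, vecMulVec_smul, smul_smul,
    mul_assoc, inv_mul_cancel₀ hv', mul_one]

theorem posSemidef_projLine (v : m → 𝕜) : (projLine v).PosSemidef :=
  (posSemidef_vecMulVec_self_star v).smul (inv_nonneg.mpr (dotProduct_star_self_nonneg v))

theorem trace_projLine_mul (v : m → 𝕜) (M : Matrix m m 𝕜) :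
    (projLine v * M).trace = (star v ⬝ᵥ M *ᵥ v) / (star v ⬝ᵥ v) := by
  rw [projLine, smul_mul, trace_smul, vecMulVec_mul, trace_vecMulVec, smul_eq_mul, div_eq_inv_mul,
    dotProduct_comm v, ← dotProduct_mulVec]

theorem mul_projLine_mul {M : Matrix m m 𝕜} (hM : M.IsHermitian) (v : m → 𝕜) :
    M * projLine v * M = (star v ⬝ᵥ v)⁻¹ • vecMulVec (M *ᵥ v) (star (M *ᵥ v)) := by
  rw [projLine, Matrix.mul_smul, Matrix.smul_mul, mul_vecMulVec, vecMulVec_mul, star_mulVec, hM.eq]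

theorem star_mulVec_dotProduct_mulVec {M : Matrix m m 𝕜} (hM : M.IsHermitian) (v : m → 𝕜) :
    star v ⬝ᵥ (M * M) *ᵥ v = star (M *ᵥ v) ⬝ᵥ M *ᵥ v := by
  rw [← mulVec_mulVec, dotProduct_mulVec, star_mulVec, hM.eq]

theorem inv_trace_smul_mul_projLine_mul {M σ : Matrix m m 𝕜} (hM : M.IsHermitian)
    (hMσ : M * M = σ) {v : m → 𝕜} (hMv : M *ᵥ v ≠ 0) {t : 𝕜} (ht : t ≠ 0) :
    ((t • projLine v * σ).trace)⁻¹ • (M * (t • projLine v) * M) = projLine (M *ᵥ v) := by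
  subst hMσ
  have hv : v ≠ 0 := by rintro rfl; exact hMv (mulVec_zero M)
  have hv' : star v ⬝ᵥ v ≠ 0 := (dotProduct_star_self_pos_iff.mpr hv).ne'
  have hMv' : star (M *ᵥ v) ⬝ᵥ M *ᵥ v ≠ 0 := (dotProduct_star_self_pos_iff.mpr hMv).ne'
  rw [Matrix.smul_mul, trace_smul, smul_eq_mul, trace_projLine_mul,
    star_mulVec_dotProduct_mulVec hM, Matrix.mul_smul, Matrix.smul_mul, mul_projLine_mul hM,
    projLine, smul_smul, smul_smul]
  congr 1
  field_simp

theorem posSemidef_one_sub_projLine [DecidableEq m] {v : m → 𝕜} (hv : v ≠ 0) :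
    (1 - projLine v).PosSemidef := by
  have h : (1 - projLine v)ᴴ * (1 - projLine v) = 1 - projLine v := by
    rw [(isHermitian_one.sub (posSemidef_projLine v).1).eq, Matrix.sub_mul, Matrix.mul_sub,
      Matrix.mul_sub, projLine_mul_self hv, Matrix.one_mul, Matrix.mul_one, Matrix.one_mul,
      sub_self, sub_zero]
  rw [← h]
  exact posSemidef_conjTranspose_mul_self _

end projLine

theorem smul_le_self {m 𝕜 : Type*} [RCLike 𝕜] {X : Matrix m m 𝕜} (hX : 0 ≤ X) {s : 𝕜}
    (hs : s ≤ 1) : s • X ≤ X := by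
  rw [le_iff, ← one_smul 𝕜 X, smul_smul, mul_one, ← sub_smul]
  exact (nonneg_iff_posSemidef.mp hX).smul (sub_nonneg.mpr hs)

variable {m 𝕜 : Type*} [Fintype m] [DecidableEq m] [RCLike 𝕜]

theorem cfc_mul_cfc (A : Matrix m m 𝕜) (f g : ℝ → ℝ) :
    cfc f A * cfc g A = cfc (fun x => f x * g x) A :=
  (cfc_mul f g A (A.finite_real_spectrum.continuousOn f)
    (A.finite_real_spectrum.continuousOn g)).symm

theorem PosSemidef.sqrt_eq_cfcSqrt {A : Matrix m m 𝕜} (hA : A.PosSemidef) :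
    hA.sqrt = CFC.sqrt A := by
  rw [CFC.sqrt_eq_real_sqrt A hA.nonneg, cfcₙ_eq_cfc, hA.1.cfc_eq, IsHermitian.cfc,
    Unitary.conjStarAlgAut_apply, PosSemidef.sqrt]
  rfl

theorem PosSemidef.posSemidef_sqrt {A : Matrix m m 𝕜} (hA : A.PosSemidef) :
    hA.sqrt.PosSemidef := by
  rw [hA.sqrt_eq_cfcSqrt, ← nonneg_iff_posSemidef]
  exact CFC.sqrt_nonneg A

theorem PosSemidef.sqrt_mul_sqrt {A : Matrix m m 𝕜} (hA : A.PosSemidef) :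
    hA.sqrt * hA.sqrt = A := by
  rw [hA.sqrt_eq_cfcSqrt]
  exact CFC.sqrt_mul_sqrt_self A hA.nonneg

theorem PosSemidef.ker_toLin'_sqrt_le {A : Matrix m m 𝕜} (hA : A.PosSemidef) :
    LinearMap.ker (toLin' hA.sqrt) ≤ LinearMap.ker (toLin' A) := by
  have h := LinearMap.ker_le_ker_comp (toLin' hA.sqrt) (toLin' hA.sqrt)
  rwa [← toLin'_mul, hA.sqrt_mul_sqrt] at h

theorem PosSemidef.sqrt_mul_mul_sqrt_nonneg {A E : Matrix m m 𝕜} (hA : A.PosSemidef)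
    (hE : 0 ≤ E) : 0 ≤ hA.sqrt * E * hA.sqrt :=
  conjugate_nonneg_of_nonneg hE hA.posSemidef_sqrt.nonneg

theorem PosSemidef.sqrt_mul_mul_sqrt_le {A E : Matrix m m 𝕜} (hA : A.PosSemidef)
    (hE : E ≤ 1) : hA.sqrt * E * hA.sqrt ≤ A := by
  have h := conjugate_le_conjugate_of_nonneg hE hA.posSemidef_sqrt.nonneg
  rwa [Matrix.mul_one, hA.sqrt_mul_sqrt] at h

theorem PosSemidef.trace_sqrt_mul_mul_sqrt {A : Matrix m m 𝕜} (hA : A.PosSemidef)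
    (E : Matrix m m 𝕜) : (hA.sqrt * E * hA.sqrt).trace = (E * A).trace := by
  rw [trace_mul_cycle, hA.sqrt_mul_sqrt, trace_mul_comm]

theorem PosSemidef.trace_mul_nonneg {Q σ : Matrix m m 𝕜} (hQ : Q.PosSemidef)
    (hσ : σ.PosSemidef) : 0 ≤ (Q * σ).trace := by
  have hS := hσ.posSemidef_sqrt
  rw [← hσ.sqrt_mul_sqrt, ← Matrix.mul_assoc, trace_mul_comm, ← Matrix.mul_assoc]
  nth_rewrite 2 [← hS.1.eq]
  exact (hQ.mul_mul_conjTranspose_same _).trace_nonneg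

theorem ker_toLin'_le_of_le {A B : Matrix m m 𝕜} (hA : 0 ≤ A) (hAB : A ≤ B) :
    LinearMap.ker (toLin' B) ≤ LinearMap.ker (toLin' A) := by
  intro x hx
  rw [LinearMap.mem_ker, toLin'_apply] at hx ⊢
  have hBA := (le_iff.mp hAB).dotProduct_mulVec_nonneg x
  rw [sub_mulVec, dotProduct_sub, hx, dotProduct_zero, zero_sub, neg_nonneg] at hBA
  exact ((nonneg_iff_posSemidef.mp hA).dotProduct_mulVec_zero_iff x).mp
    (le_antisymm hBA ((nonneg_iff_posSemidef.mp hA).dotProduct_mulVec_nonneg x))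

theorem ker_toLin'_inv_trace_smul_sum_le {ι : Type*} [Fintype ι] {ρ : ι → Matrix m m 𝕜}
    (hρ : ∀ j, 0 ≤ ρ j) {i : ι} (hi : ρ i ≠ 0) :
    LinearMap.ker (toLin' ((∑ j, ρ j).trace⁻¹ • ∑ j, ρ j)) ≤ LinearMap.ker (toLin' (ρ i)) := by
  have hle : ρ i ≤ ∑ j, ρ j := Finset.single_le_sum (fun j _ => hρ j) (Finset.mem_univ i)
  have hR : ∑ j, ρ j ≠ 0 := fun h => hi (le_antisymm (h ▸ hle) (hρ i))
  have htr : (∑ j, ρ j).trace ≠ 0 :=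
    fun h => hR ((nonneg_iff_posSemidef.mp ((hρ i).trans hle)).trace_eq_zero_iff.mp h)
  rw [map_smul, LinearMap.ker_smul _ _ (inv_ne_zero htr)]
  exact ker_toLin'_le_of_le (hρ i) hle

theorem mul_eq_self_of_ker_le {G P M : Matrix m m 𝕜} (hGP : G * P = G)
    (hker : LinearMap.ker (toLin' G) ≤ LinearMap.ker (toLin' M)) : M * P = M := by
  refine (toLin'.injective (LinearMap.ext fun x => ?_)).symm
  have hx : x - P *ᵥ x ∈ LinearMap.ker (toLin' G) := by
    rw [LinearMap.mem_ker, toLin'_apply, mulVec_sub, mulVec_mulVec, hGP, sub_self]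
  have := hker hx
  rw [LinearMap.mem_ker, toLin'_apply, mulVec_sub, mulVec_mulVec, sub_eq_zero] at this
  simpa [toLin'_apply] using this

/-- The Moore–Penrose pseudo-inverse of `√G`: `√G⁻¹` on the range of `G` and `0` on its kernel
(recall `(√0)⁻¹ = 0`). -/
noncomputable def pinvSqrt (G : Matrix m m 𝕜) : Matrix m m 𝕜 :=
  cfc (fun x : ℝ => (√x)⁻¹) G

/-- The orthogonal projection onto the range of a positive semidefinite `G`. -/
noncomputable def rangeProj (G : Matrix m m 𝕜) : Matrix m m 𝕜 :=
  pinvSqrt G * G * pinvSqrt G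

theorem isHermitian_pinvSqrt (G : Matrix m m 𝕜) : (pinvSqrt G).IsHermitian :=
  cfc_predicate _ G

theorem isHermitian_rangeProj {G : Matrix m m 𝕜} (hG : G.IsHermitian) :
    (rangeProj G).IsHermitian := by
  have hH := isHermitian_pinvSqrt G
  unfold rangeProj
  nth_rewrite 2 [← hH.eq]
  exact isHermitian_mul_mul_conjTranspose _ hG

theorem rangeProj_eq_cfc {G : Matrix m m 𝕜} (hG : G.IsHermitian) :
    rangeProj G = cfc (fun x : ℝ => (√x)⁻¹ * x * (√x)⁻¹) G := by
  rw [rangeProj, pinvSqrt, ← cfc_mul_cfc, ← cfc_mul_cfc, cfc_id' ℝ G hG.isSelfAdjoint]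

theorem rangeProj_mul_pinvSqrt {G : Matrix m m 𝕜} (hG : G.IsHermitian) :
    rangeProj G * pinvSqrt G = pinvSqrt G := by
  rw [rangeProj_eq_cfc hG, pinvSqrt, cfc_mul_cfc]
  congr 1 with x
  rcases le_or_gt x 0 with hx | hx
  · simp [Real.sqrt_eq_zero'.mpr hx]
  · rw [Real.inv_sqrt_mul_self_mul_inv_sqrt hx, one_mul]

theorem pinvSqrt_mul_rangeProj {G : Matrix m m 𝕜} (hG : G.IsHermitian) :
    pinvSqrt G * rangeProj G = pinvSqrt G := by
  rw [rangeProj_eq_cfc hG, pinvSqrt, cfc_mul_cfc]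
  congr 1 with x
  rcases le_or_gt x 0 with hx | hx
  · simp [Real.sqrt_eq_zero'.mpr hx]
  · rw [Real.inv_sqrt_mul_self_mul_inv_sqrt hx, mul_one]

theorem mul_rangeProj {G : Matrix m m 𝕜} (hG : 0 ≤ G) : G * rangeProj G = G := by
  have hG' := (nonneg_iff_posSemidef.mp hG).1
  rw [rangeProj_eq_cfc hG']
  nth_rewrite 1 3 [← cfc_id' ℝ G hG'.isSelfAdjoint]
  rw [cfc_mul_cfc]
  refine cfc_congr fun x hx => ?_
  rcases (spectrum_nonneg_of_nonneg hG hx).eq_or_lt with rfl | hx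
  · simp
  · rw [Real.inv_sqrt_mul_self_mul_inv_sqrt hx, mul_one]

theorem mul_rangeProj_of_ker_le {G M : Matrix m m 𝕜} (hG : 0 ≤ G)
    (hker : LinearMap.ker (toLin' G) ≤ LinearMap.ker (toLin' M)) : M * rangeProj G = M :=
  mul_eq_self_of_ker_le (mul_rangeProj hG) hker

theorem rangeProj_mul_of_ker_le {G M : Matrix m m 𝕜} (hG : 0 ≤ G) (hM : M.IsHermitian)
    (hker : LinearMap.ker (toLin' G) ≤ LinearMap.ker (toLin' M)) : rangeProj G * M = M := by
  have := congr_arg conjTranspose (mul_rangeProj_of_ker_le hG hker)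
  rwa [conjTranspose_mul, hM.eq, (isHermitian_rangeProj (nonneg_iff_posSemidef.mp hG).1).eq]
    at this

theorem eq_zero_of_pinvSqrt_mulVec_eq_zero {G : Matrix m m 𝕜} {v : m → 𝕜}
    (hv : rangeProj G *ᵥ v = v) (h : pinvSqrt G *ᵥ v = 0) : v = 0 := by
  rw [← hv, rangeProj, ← mulVec_mulVec, h, mulVec_zero]

theorem rangeProj_add_eq (A B : Matrix m m 𝕜) :
    rangeProj (A + B) =
      pinvSqrt (A + B) * A * pinvSqrt (A + B) + pinvSqrt (A + B) * B * pinvSqrt (A + B) := by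
  rw [rangeProj, Matrix.mul_add, Matrix.add_mul]

section add

variable {A B : Matrix m m 𝕜}

theorem mul_rangeProj_add_left (hA : 0 ≤ A) (hB : 0 ≤ B) : A * rangeProj (A + B) = A :=
  mul_rangeProj_of_ker_le (add_nonneg hA hB) (ker_toLin'_le_of_le hA (le_add_of_nonneg_right hB))

theorem rangeProj_add_mul_left (hA : 0 ≤ A) (hB : 0 ≤ B) : rangeProj (A + B) * A = A :=
  rangeProj_mul_of_ker_le (add_nonneg hA hB) (nonneg_iff_posSemidef.mp hA).1
    (ker_toLin'_le_of_le hA (le_add_of_nonneg_right hB))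

theorem rangeProj_add_mul_right (hA : 0 ≤ A) (hB : 0 ≤ B) : rangeProj (A + B) * B = B := by
  rw [add_comm]
  exact rangeProj_add_mul_left hB hA

end add

theorem IsHermitian.exists_eigenvector_of_not_isIdempotentElem {M : Matrix m m 𝕜}
    (hM : M.IsHermitian) (h : ¬IsIdempotentElem M) :
    ∃ (v : m → 𝕜) (t : ℝ), t ≠ 0 ∧ t ≠ 1 ∧ v ≠ 0 ∧ M *ᵥ v = (t : 𝕜) • v := by
  rw [isIdempotentElem_iff_spectrum_subset ℝ M hM.isSelfAdjoint,
    hM.spectrum_real_eq_range_eigenvalues, Set.range_subset_iff] at h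
  obtain ⟨i, hi⟩ := not_forall.mp h
  simp only [Set.mem_insert_iff, Set.mem_singleton_iff, not_or] at hi
  refine ⟨_, _, hi.1, hi.2,
    (WithLp.ofLp_eq_zero 2).ne.2 (hM.eigenvectorBasis.orthonormal.ne_zero i), ?_⟩
  rw [hM.mulVec_eigenvectorBasis i, RCLike.real_smul_eq_coe_smul (K := 𝕜)]

theorem ker_sup_ker_eq_top_of_isIdempotentElem {A B : Matrix m m 𝕜} (hA : 0 ≤ A) (hB : 0 ≤ B)
    (hidem : IsIdempotentElem (pinvSqrt (A + B) * B * pinvSqrt (A + B))) :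
    LinearMap.ker (toLin' A) ⊔ LinearMap.ker (toLin' B) = ⊤ := by
  set H := pinvSqrt (A + B)
  set P := rangeProj (A + B)
  have hG' : (A + B).IsHermitian := (nonneg_iff_posSemidef.mp (add_nonneg hA hB)).1
  have hP : P = H * A * H + H * B * H := rangeProj_add_eq A B
  have hHP : H * P = H := pinvSqrt_mul_rangeProj hG'
  -- `H A H + H B H` is a projection and `H B H` is one, so `H A H` and `H B H` are orthogonal.
  have hBA : H * B * H * (H * A * H) = 0 := by
    rw [eq_sub_of_add_eq hP.symm, Matrix.mul_sub, hidem.eq, Matrix.mul_assoc (H * B), hHP,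
      sub_self]
  have hAB : H * A * H * (H * B * H) = 0 := by
    rw [eq_sub_of_add_eq hP.symm, Matrix.sub_mul, hidem.eq, ← Matrix.mul_assoc,
      ← Matrix.mul_assoc, rangeProj_mul_pinvSqrt hG', sub_self]
  have hvanish : ∀ {M N : Matrix m m 𝕜}, P * M = M → H * M * H * (H * N * H) = 0 →
      ∀ z, M *ᵥ ((H * H * N * H) *ᵥ z) = 0 := by
    intro M N hPM hMN z
    refine eq_zero_of_pinvSqrt_mulVec_eq_zero (G := A + B) (by rw [mulVec_mulVec, hPM]) ?_
    rw [mulVec_mulVec, mulVec_mulVec, ← zero_mulVec z, ← hMN]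
    simp only [H, Matrix.mul_assoc]
  refine eq_top_iff.mpr fun x _ => ?_
  set y := (A + B) *ᵥ (H *ᵥ x)
  -- `x = (x - P x) + H H B H y + H H A H y`, with the first two summands in `ker A`.
  have hx : x = (x - P *ᵥ x + (H * H * B * H) *ᵥ y) + (H * H * A * H) *ᵥ y := by
    have hPx : P *ᵥ x = (H * H * B * H) *ᵥ y + (H * H * A * H) *ᵥ y := by
      rw [← add_mulVec, show H * H * B * H + H * H * A * H = H * P by
        rw [hP]; simp only [Matrix.mul_add, Matrix.mul_assoc]; abel, hHP]
      simp only [y, P, H, rangeProj, mulVec_mulVec, Matrix.mul_assoc]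
    rw [add_assoc, ← hPx, sub_add_cancel]
  rw [hx]
  refine Submodule.add_mem_sup ?_ ?_ <;>
    simp only [LinearMap.mem_ker, toLin'_apply]
  · rw [mulVec_add, hvanish (rangeProj_add_mul_left hA hB) hAB, add_zero, mulVec_sub,
      mulVec_mulVec, mul_rangeProj_add_left hA hB, sub_self]
  · exact hvanish (rangeProj_add_mul_right hA hB) hBA y

theorem exists_mulVec_eq_smul_mulVec_of_not_isIdempotentElem {A B : Matrix m m 𝕜} (hA : 0 ≤ A)
    (hB : 0 ≤ B) (hidem : ¬IsIdempotentElem (pinvSqrt (A + B) * B * pinvSqrt (A + B))) :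
    ∃ (w : m → 𝕜) (c : 𝕜), c ≠ 0 ∧ A *ᵥ w = c • B *ᵥ w ∧ B *ᵥ w ≠ 0 := by
  set H := pinvSqrt (A + B)
  set P := rangeProj (A + B)
  have hG' : (A + B).IsHermitian := (nonneg_iff_posSemidef.mp (add_nonneg hA hB)).1
  have hH : H.IsHermitian := isHermitian_pinvSqrt _
  have hBt : (H * B * H).IsHermitian := by
    nth_rewrite 2 [← hH.eq]
    exact isHermitian_mul_mul_conjTranspose _ (nonneg_iff_posSemidef.mp hB).1
  obtain ⟨u, β, hβ0, hβ1, hu, hBu⟩ := hBt.exists_eigenvector_of_not_isIdempotentElem hidem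
  have hβ0' : (β : 𝕜) ≠ 0 := RCLike.ofReal_ne_zero.mpr hβ0
  have hPA : P * A = A := rangeProj_add_mul_left hA hB
  have hPB : P * B = B := rangeProj_add_mul_right hA hB
  have hPu : P *ᵥ u = u := by
    have hu' : u = H *ᵥ ((β : 𝕜)⁻¹ • B *ᵥ H *ᵥ u) := by
      rw [mulVec_smul, mulVec_mulVec, mulVec_mulVec, hBu, smul_smul, inv_mul_cancel₀ hβ0',
        one_smul]
    rw [hu', mulVec_mulVec, rangeProj_mul_pinvSqrt hG']
  set w := H *ᵥ u
  have hBw : H *ᵥ (B *ᵥ w) = (β : 𝕜) • u := by rw [mulVec_mulVec, mulVec_mulVec, hBu]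
  have hAw : H *ᵥ (A *ᵥ w) = (1 - β : 𝕜) • u := by
    rw [mulVec_mulVec, mulVec_mulVec, eq_sub_of_add_eq (rangeProj_add_eq A B).symm, sub_mulVec,
      hPu, hBu, sub_smul, one_smul]
  have hBw0 : B *ᵥ w ≠ 0 := fun h => by
    rw [h, mulVec_zero, eq_comm, smul_eq_zero] at hBw
    exact hBw.elim hβ0' hu
  refine ⟨w, (1 - β) / β, div_ne_zero (sub_ne_zero.mpr (by exact_mod_cast Ne.symm hβ1)) hβ0',
    ?_, hBw0⟩
  -- `β A w - (1 - β) B w` lies in the range of `A + B` and is killed by `H`.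
  have hy : (β : 𝕜) • A *ᵥ w - (1 - β : 𝕜) • B *ᵥ w = 0 := by
    refine eq_zero_of_pinvSqrt_mulVec_eq_zero (G := A + B) ?_ ?_
    · rw [mulVec_sub, mulVec_smul, mulVec_smul, mulVec_mulVec _ P A, mulVec_mulVec _ P B, hPA,
        hPB]
    · rw [mulVec_sub, mulVec_smul, mulVec_smul, hAw, hBw, smul_smul, smul_smul, mul_comm,
        sub_self]
  rw [sub_eq_zero] at hy
  rw [div_eq_inv_mul, mul_smul, ← hy, smul_smul, inv_mul_cancel₀ hβ0', one_smul]

theorem exists_mulVec_eq_smul_mulVec {A B : Matrix m m 𝕜} (hA : 0 ≤ A) (hB : 0 ≤ B)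
    (hAB : LinearMap.ker (toLin' A) ⊔ LinearMap.ker (toLin' B) ≠ ⊤) :
    ∃ (w : m → 𝕜) (c : 𝕜), c ≠ 0 ∧ A *ᵥ w = c • B *ᵥ w ∧ B *ᵥ w ≠ 0 :=
  exists_mulVec_eq_smul_mulVec_of_not_isIdempotentElem hA hB fun hidem =>
    hAB (ker_sup_ker_eq_top_of_isIdempotentElem hA hB hidem)

end Matrix

section Compatibility

variable {n : ℕ} {σ1 σ2 : Matrix (Fin n) (Fin n) ℂ}

theorem QObjCompatible.ker_sup_ne_top (h : QObjCompatible σ1 σ2) :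
    LinearMap.ker (toLin' σ1) ⊔ LinearMap.ker (toLin' σ2) ≠ ⊤ := by
  obtain ⟨X1, _, X2, _, -, -, ρ, x1, x2, hρ, -, htr, rfl, rfl⟩ := h
  have hρ' : ∀ a b, 0 ≤ ρ a b := fun a b => nonneg_iff_posSemidef.mpr (hρ a b)
  have hτ : ρ x1 x2 ≠ 0 := by rintro h; simp [h] at htr
  refine ne_top_of_le_ne_top ?_ (sup_le (ker_toLin'_inv_trace_smul_sum_le (hρ' x1) hτ)
    (ker_toLin'_inv_trace_smul_sum_le (fun a => hρ' a x2) hτ))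
  rwa [Ne, LinearMap.ker_eq_top, LinearEquiv.map_eq_zero_iff]

theorem re_trace_mul_pos_of_projLine {σ : Matrix (Fin n) (Fin n) ℂ} (hσ : IsDensityMatrix σ)
    {w : Fin n → ℂ} (hw : hσ.1.sqrt *ᵥ w ≠ 0) :
    0 < (((2⁻¹ : ℂ) • projLine w) * σ).trace.re ∧
      0 < ((1 - (2⁻¹ : ℂ) • projLine w) * σ).trace.re := by
  have hS := hσ.1.posSemidef_sqrt
  have hw' : w ≠ 0 := by rintro rfl; exact hw (mulVec_zero _)
  constructor
  · rw [Matrix.smul_mul, trace_smul, smul_eq_mul, trace_projLine_mul, ← hσ.1.sqrt_mul_sqrt,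
      star_mulVec_dotProduct_mulVec hS.1]
    exact (Complex.pos_iff.mp (mul_pos (by positivity) (div_pos
      (dotProduct_star_self_pos_iff.mpr hw) (dotProduct_star_self_pos_iff.mpr hw')))).1
  · have hsplit : (1 - (2⁻¹ : ℂ) • projLine w) * σ =
        (2⁻¹ : ℂ) • σ + (2⁻¹ : ℂ) • ((1 - projLine w) * σ) := by
      rw [Matrix.sub_mul, Matrix.sub_mul, Matrix.one_mul, Matrix.smul_mul]
      module
    rw [hsplit, trace_add, trace_smul, trace_smul, hσ.2]
    exact (Complex.pos_iff.mp (add_pos_of_pos_of_nonneg (by positivity) (smul_nonneg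
      (by positivity) ((posSemidef_one_sub_projLine hw').trace_mul_nonneg hσ.1)))).1

theorem qSubjCompatible_of_mulVec_eq_smul_mulVec (h1 : IsDensityMatrix σ1)
    (h2 : IsDensityMatrix σ2) {w : Fin n → ℂ} {c : ℂ} (hc : c ≠ 0)
    (hw : h1.1.sqrt *ᵥ w = c • h2.1.sqrt *ᵥ w) (hw0 : h2.1.sqrt *ᵥ w ≠ 0) :
    QSubjCompatible h1.1 h2.1 := by
  have hw1 : h1.1.sqrt *ᵥ w ≠ 0 := by rw [hw]; exact smul_ne_zero hc hw0
  have hw' : w ≠ 0 := by rintro rfl; exact hw0 (mulVec_zero _)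
  refine ⟨Fin 2, inferInstance, ⟨0⟩, ![(2⁻¹ : ℂ) • projLine w, 1 - (2⁻¹ : ℂ) • projLine w],
    ?_, ?_, ?_, 0, ?_⟩
  · refine Fin.forall_fin_two.mpr ⟨(posSemidef_projLine w).smul (by positivity), ?_⟩
    have hsplit : 1 - (2⁻¹ : ℂ) • projLine w = (2⁻¹ : ℂ) • 1 + (2⁻¹ : ℂ) • (1 - projLine w) := by
      module
    simp only [Matrix.cons_val_one, Matrix.cons_val_zero]
    rw [hsplit]
    exact (PosSemidef.one.smul (by positivity)).add
      ((posSemidef_one_sub_projLine hw').smul (by positivity))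
  · simp [Fin.sum_univ_two]
  · refine Fin.forall_fin_two.mpr ⟨⟨?_, ?_⟩, ⟨?_, ?_⟩⟩
    · exact (re_trace_mul_pos_of_projLine h1 hw1).1
    · exact (re_trace_mul_pos_of_projLine h2 hw0).1
    · exact (re_trace_mul_pos_of_projLine h1 hw1).2
    · exact (re_trace_mul_pos_of_projLine h2 hw0).2
  · simp only [Matrix.cons_val_zero]
    have h2inv : (2⁻¹ : ℂ) ≠ 0 := inv_ne_zero two_ne_zero
    rw [inv_trace_smul_mul_projLine_mul h1.1.posSemidef_sqrt.1 h1.1.sqrt_mul_sqrt hw1 h2inv,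
      inv_trace_smul_mul_projLine_mul h2.1.posSemidef_sqrt.1 h2.1.sqrt_mul_sqrt hw0 h2inv, hw,
      projLine_smul _ hc]

theorem QSubjCompatible.exists_pos_le (h1 : σ1.PosSemidef) (h2 : σ2.PosSemidef)
    (h : QSubjCompatible h1 h2) : ∃ τ, 0 < τ ∧ τ ≤ σ1 ∧ τ ≤ σ2 := by
  obtain ⟨X, _, -, E, hE, hsum, htr, x, hx⟩ := h
  have hE1 : E x ≤ 1 :=
    hsum ▸ Finset.single_le_sum (fun i _ => (hE i).nonneg) (Finset.mem_univ x)
  set a := (E x * σ1).trace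
  set b := (E x * σ2).trace
  set τ1 := h1.sqrt * E x * h1.sqrt
  set τ2 := h2.sqrt * E x * h2.sqrt
  have hτ1 : 0 ≤ τ1 := h1.sqrt_mul_mul_sqrt_nonneg (hE x).nonneg
  have hτ2 : 0 ≤ τ2 := h2.sqrt_mul_mul_sqrt_nonneg (hE x).nonneg
  have hτa : τ1.trace = a := h1.trace_sqrt_mul_mul_sqrt (E x)
  have hτb : τ2.trace = b := h2.trace_sqrt_mul_mul_sqrt (E x)
  have ha : 0 < a := Complex.pos_iff.mpr
    ⟨(htr x).1, (Complex.nonneg_iff.mp (hτa ▸ (nonneg_iff_posSemidef.mp hτ1).trace_nonneg)).2⟩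
  have hb : 0 < b := Complex.pos_iff.mpr
    ⟨(htr x).2, (Complex.nonneg_iff.mp (hτb ▸ (nonneg_iff_posSemidef.mp hτ2).trace_nonneg)).2⟩
  have hba : b • τ1 = a • τ2 := calc
    b • τ1 = (a * b) • (a⁻¹ • τ1) := by
      rw [smul_smul, mul_comm a b, mul_assoc, mul_inv_cancel₀ ha.ne', mul_one]
    _ = (a * b) • (b⁻¹ • τ2) := by rw [hx]
    _ = a • τ2 := by rw [smul_smul, mul_assoc, mul_inv_cancel₀ hb.ne', mul_one]
  have hle_one : ∀ {s t : ℂ}, 0 < s → 0 < t → (s + t)⁻¹ * t ≤ 1 := fun {s t} hs ht => by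
    rw [← sub_nonneg, show 1 - (s + t)⁻¹ * t = (s + t)⁻¹ * s by field_simp; ring]
    positivity
  refine ⟨((a + b)⁻¹ * b) • τ1, lt_of_le_of_ne ?_ fun h => ?_,
    (smul_le_self hτ1 (hle_one ha hb)).trans (h1.sqrt_mul_mul_sqrt_le hE1), ?_⟩
  · exact nonneg_iff_posSemidef.mpr ((nonneg_iff_posSemidef.mp hτ1).smul (by positivity))
  · have := congr_arg trace h
    rw [trace_zero, trace_smul, hτa, smul_eq_mul] at this
    exact (by positivity : (0 : ℂ) < (a + b)⁻¹ * b * a).ne this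
  · rw [mul_smul, hba, smul_smul, add_comm]
    exact (smul_le_self hτ2 (hle_one hb ha)).trans (h2.sqrt_mul_mul_sqrt_le hE1)

theorem qObjCompatible_of_pos_le (h1 : σ1.trace = 1) (h2 : σ2.trace = 1)
    {τ : Matrix (Fin n) (Fin n) ℂ} (hτ : 0 < τ) (hτ1 : τ ≤ σ1) (hτ2 : τ ≤ σ2) :
    QObjCompatible σ1 σ2 := by
  have hτ' := nonneg_iff_posSemidef.mp hτ.le
  have htr : 0 < τ.trace :=
    lt_of_le_of_ne hτ'.trace_nonneg fun h => hτ.ne' (hτ'.trace_eq_zero_iff.mp h.symm)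
  have hhalf : (0 : ℂ) ≤ 2⁻¹ := by positivity
  refine ⟨Fin 2, inferInstance, Fin 2, inferInstance, ⟨0⟩, ⟨0⟩,
    fun a b => (2⁻¹ : ℂ) • ![![τ, σ1 - τ], ![σ2 - τ, τ]] a b, 0, 0, ?_, ?_, ?_, ?_, ?_⟩
  · simp only [Fin.forall_fin_two, Matrix.cons_val_zero, Matrix.cons_val_one]
    exact ⟨⟨hτ'.smul hhalf, (le_iff.mp hτ1).smul hhalf⟩,
      ⟨(le_iff.mp hτ2).smul hhalf, hτ'.smul hhalf⟩⟩
  · simp only [Fin.sum_univ_two, Matrix.cons_val_zero, Matrix.cons_val_one, trace_smul,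
      trace_sub, h1, h2, smul_eq_mul]
    ring
  · simp only [Matrix.cons_val_zero, trace_smul, smul_eq_mul]
    exact (Complex.pos_iff.mp (mul_pos (by positivity) htr)).1
  · simp only [Fin.sum_univ_two, Matrix.cons_val_zero, Matrix.cons_val_one, ← smul_add,
      add_sub_cancel, trace_smul, h1, smul_smul]
    norm_num
  · simp only [Fin.sum_univ_two, Matrix.cons_val_zero, Matrix.cons_val_one, ← smul_add,
      add_sub_cancel, trace_smul, h2, smul_smul]
    norm_num

end Compatibility

theorem qObjCompatible_iff_qSubjCompatible_general
    {n : ℕ} (σ1 σ2 : Matrix (Fin n) (Fin n) ℂ)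
    (h1 : IsDensityMatrix σ1) (h2 : IsDensityMatrix σ2) :
    QObjCompatible σ1 σ2 ↔ QSubjCompatible h1.1 h2.1 := by
  constructor
  · intro hobj
    have hker : LinearMap.ker (toLin' h1.1.sqrt) ⊔ LinearMap.ker (toLin' h2.1.sqrt) ≠ ⊤ :=
      ne_top_of_le_ne_top hobj.ker_sup_ne_top
        (sup_le_sup h1.1.ker_toLin'_sqrt_le h2.1.ker_toLin'_sqrt_le)
    obtain ⟨w, c, hc, hw, hw0⟩ :=
      exists_mulVec_eq_smul_mulVec h1.1.posSemidef_sqrt.nonneg h2.1.posSemidef_sqrt.nonneg hker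
    exact qSubjCompatible_of_mulVec_eq_smul_mulVec h1 h2 hc hw hw0
  · intro hsubj
    obtain ⟨τ, hτ, hτ1, hτ2⟩ := hsubj.exists_pos_le
    exact qObjCompatible_of_pos_le h1.2 h2.2 hτ hτ1 hτ2

/-- For density matrices on `ℂ^n` (`n ≥ 1`), objective and subjective
compatibility are equivalent. -/
theorem qObjCompatible_iff_qSubjCompatible
    {n : ℕ} (hn : 1 ≤ n) (σ1 σ2 : Matrix (Fin n) (Fin n) ℂ)
    (h1 : IsDensityMatrix σ1) (h2 : IsDensityMatrix σ2) :
    QObjCompatible σ1 σ2 ↔ QSubjCompatible h1.1 h2.1 :=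
  qObjCompatible_iff_qSubjCompatible_general σ1 σ2 h1 h2
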